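/- arXiv:2307.08212 — 3 statements merged into one kernel-verified Lean document; each statement's English description precedes it below -/
import Mathlib

section
/- Suppose there exists a real ε ∈ [0, 1/2) such that for all y ∈ 𝒴 and all x ∈ 𝒳 one has |π_X^y(x)/π_X(x) − 1| ≤ ε. Then for every function f : 𝒳 × 𝒴 → ℝ≥0, Ent f ≤ (1 + ε/(1−2ε)) · (E[Ent_X f] + E[Ent_Y f]). -/
open scoped BigOperators Classical

noncomputable section

/-- Expectation of `f` under the (finitely supported) density `p`. -/
def pmean {α : Type*} [Fintype α] (p f : α → ℝ) : ℝ := ∑ a, p a * f a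

/-- Variance of `f` under the density `p`. -/
def pvar {α : Type*} [Fintype α] (p f : α → ℝ) : ℝ :=
  pmean p (fun a => (f a - pmean p f) ^ 2)

/-- Entropy of `f` under the density `p` (with the convention `0 log 0 = 0`,
which is automatic since `Real.log 0 = 0`). -/
def pent {α : Type*} [Fintype α] (p f : α → ℝ) : ℝ :=
  pmean p (fun a => f a * Real.log (f a)) - pmean p f * Real.log (pmean p f)

/-- Total variation distance between two densities. -/
def ptv {α : Type*} [Fintype α] (p q : α → ℝ) : ℝ := (1 / 2) * ∑ a, |p a - q a|

/-- Marginal on the first coordinate. -/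
def margX {X Y : Type*} [Fintype X] [Fintype Y] (π : X × Y → ℝ) : X → ℝ :=
  fun x => ∑ y, π (x, y)

/-- Marginal on the second coordinate. -/
def margY {X Y : Type*} [Fintype X] [Fintype Y] (π : X × Y → ℝ) : Y → ℝ :=
  fun y => ∑ x, π (x, y)

/-- Conditional distribution of the first coordinate given the second equals `y`. -/
def condX {X Y : Type*} [Fintype X] [Fintype Y] (π : X × Y → ℝ) (y : Y) : X → ℝ :=
  fun x => π (x, y) / margY π y

/-- Conditional distribution of the second coordinate given the first equals `x`. -/
def condY {X Y : Type*} [Fintype X] [Fintype Y] (π : X × Y → ℝ) (x : X) : Y → ℝ :=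
  fun y => π (x, y) / margX π x

/-!
By the chain rule, `Ent f = E[Ent_X f] + Ent(E_X f) = E[Ent_Y f] + Ent(E_Y f)`, so it suffices to
show `Ent(E_X f) ≤ E[Ent_Y f] + ε (Ent(E_Y f) + Ent(E_X f))`. Write `g = E_X f`, `h = E_Y f` and
`m = E f`. Since `π_X^y(x) π_Y(y) = π_Y^x(y) π_X(x)`, the entropy inequality
`E_ν[u log G] ≤ Ent_ν u + E_ν u · log E_ν G` for each conditional law `ν = π_Y^x` gives
`Ent(g) ≤ E[Ent_Y f] + E_X[h log (E_Y^x g / m)]`, and `log t ≤ t - 1` bounds the last term by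
`Cov_π(h(x), g(y)) / m`. Weak correlation bounds this covariance by `ε E|h - m| E|g - m|`, and
Pinsker's inequality `(E|h - m|)² ≤ 2 m Ent(h)` together with `2ab ≤ a² + b²` closes the argument.
-/

open Finset InformationTheory

section Density

open Real

variable {α : Type*} [Fintype α] {p u v : α → ℝ}

lemma pmean_add : pmean p (fun a => u a + v a) = pmean p u + pmean p v := by
  simp only [pmean, mul_add, sum_add_distrib]

lemma pmean_sub : pmean p (fun a => u a - v a) = pmean p u - pmean p v := by
  simp only [pmean, mul_sub, sum_sub_distrib]

lemma pmean_mul_const (k : ℝ) : pmean p (fun a => u a * k) = pmean p u * k := by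
  simp only [pmean, ← mul_assoc, sum_mul]

lemma pmean_const (hp1 : ∑ a, p a = 1) (k : ℝ) : pmean p (fun _ => k) = k := by
  rw [pmean, ← sum_mul, hp1, one_mul]

lemma pmean_const_mul (k : ℝ) : pmean p (fun a => k * u a) = k * pmean p u := by
  simp only [pmean, mul_left_comm, ← mul_sum]

lemma pmean_le_pmean (hp : ∀ a, 0 ≤ p a) (h : ∀ a, u a ≤ v a) : pmean p u ≤ pmean p v :=
  sum_le_sum fun a _ => mul_le_mul_of_nonneg_left (h a) (hp a)

lemma pmean_nonneg (hp : ∀ a, 0 ≤ p a) (hu : ∀ a, 0 ≤ u a) : 0 ≤ pmean p u :=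
  sum_nonneg fun a _ => mul_nonneg (hp a) (hu a)

lemma mul_le_pmean (hp : ∀ a, 0 ≤ p a) (hu : ∀ a, 0 ≤ u a) (a : α) : p a * u a ≤ pmean p u :=
  single_le_sum (f := fun a => p a * u a) (fun a _ => mul_nonneg (hp a) (hu a)) (mem_univ a)

lemma mul_eq_zero_of_pmean_eq_zero (hp : ∀ a, 0 ≤ p a) (hu : ∀ a, 0 ≤ u a)
    (h : pmean p u = 0) (a : α) : p a * u a = 0 :=
  (sum_eq_zero_iff_of_nonneg fun a _ => mul_nonneg (hp a) (hu a)).mp h a (mem_univ a)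

lemma mul_log_sub_mul_log_le {s t : ℝ} (hs : 0 ≤ s) (ht : 0 ≤ t) (hpos : s ≠ 0 → 0 < t) :
    s * log t - s * log s ≤ t - s := by
  rcases hs.eq_or_lt with rfl | hs
  · simpa using ht
  have ht := hpos hs.ne'
  have h := mul_le_mul_of_nonneg_left (log_le_sub_one_of_pos (div_pos ht hs)) hs.le
  rw [log_div ht.ne' hs.ne', mul_sub_one, mul_div_cancel₀ _ hs.ne'] at h
  linarith

/-- The entropy inequality (Gibbs variational principle). -/
lemma pmean_mul_log_le_pent_add {G : α → ℝ} (hp : ∀ a, 0 ≤ p a) (hu : ∀ a, 0 ≤ u a)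
    (hG : ∀ a, 0 ≤ G a) (hpos : ∀ a, u a ≠ 0 → 0 < G a) :
    pmean p (fun a => u a * log (G a)) ≤ pent p u + pmean p u * log (pmean p G) := by
  rcases (pmean_nonneg hp hu).eq_or_lt with hc | hc
  · have hpu := mul_eq_zero_of_pmean_eq_zero hp hu hc.symm
    simp only [pent, pmean, ← mul_assoc, hpu, zero_mul, sum_const_zero, sub_zero, add_zero,
      le_refl]
  set c := pmean p u
  set S := pmean p G
  obtain ⟨a₀, ha₀⟩ : ∃ a, 0 < p a * u a := by
    by_contra! h
    exact hc.ne' (sum_eq_zero fun a _ => (h a).antisymm (mul_nonneg (hp a) (hu a)))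
  have hS : 0 < S := (mul_pos (pos_of_mul_pos_left ha₀ (hu a₀)) (hpos a₀
    (pos_of_mul_pos_right ha₀ (hp a₀)).ne')).trans_le (mul_le_pmean hp hG a₀)
  -- Compare `u` with the density `G c / S`, which has the same `p`-mean `c`.
  have pointwise : ∀ a, u a * log (G a) - u a * log (u a) ≤
      G a * (c / S) - u a - u a * (log c - log S) := by
    intro a
    rcases (hu a).eq_or_lt with hua | hua
    · simp only [← hua, zero_mul, sub_self, sub_zero]
      exact mul_nonneg (hG a) (div_nonneg hc.le hS.le)
    have hGa := hpos a hua.ne'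
    have h := mul_log_sub_mul_log_le (hu a) (mul_nonneg (hG a) (div_nonneg hc.le hS.le))
      fun _ => mul_pos hGa (div_pos hc hS)
    rw [log_mul hGa.ne' (div_pos hc hS).ne', log_div hc.ne' hS.ne'] at h
    linarith
  have h := pmean_le_pmean hp pointwise
  rw [pmean_sub, pmean_sub, pmean_sub, pmean_mul_const, pmean_mul_const,
    mul_div_cancel₀ _ hS.ne'] at h
  rw [pent]
  linarith

lemma monotoneOn_add_one_mul_log_sub :
    MonotoneOn (fun r : ℝ => (r + 1) * log r - 2 * (r - 1)) (Set.Ioi 0) := by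
  have hderiv : ∀ x ∈ Set.Ioi (0 : ℝ), HasDerivAt (fun r : ℝ => (r + 1) * log r - 2 * (r - 1))
      (log x + x⁻¹ - 1) x := fun x (hx : 0 < x) => by
    refine ((((hasDerivAt_id x).add_const 1).mul (hasDerivAt_log hx.ne')).sub
      (((hasDerivAt_id x).sub_const 1).const_mul 2)).congr_deriv ?_
    simp only [id]
    field_simp
    ring
  refine monotoneOn_of_hasDerivWithinAt_nonneg (convex_Ioi 0)
    (fun x hx => (hderiv x hx).continuousAt.continuousWithinAt)
    (fun x hx => (hderiv x (interior_subset hx)).hasDerivWithinAt) fun x hx => ?_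
  have hx : (0 : ℝ) < x := interior_subset hx
  linarith [one_sub_inv_le_log_of_pos hx]

lemma three_mul_sq_sub_one_le_klFun {r : ℝ} (hr : 0 ≤ r) :
    3 * (r - 1) ^ 2 ≤ 2 * (r + 2) * klFun r := by
  set ψ := fun r : ℝ => 2 * (r + 2) * klFun r - 3 * (r - 1) ^ 2
  have hψ : Continuous ψ := by have := continuous_klFun; fun_prop
  -- `ψ'` has the sign of `r - 1` by `monotoneOn_add_one_mul_log_sub`, so `ψ` is minimal at `1`.
  set ψ' := fun x : ℝ => 4 * ((x + 1) * log x - 2 * (x - 1))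
  have hderiv : ∀ x : ℝ, 0 < x → HasDerivAt ψ (ψ' x) x :=
    fun x hx => by
      refine ((((hasDerivAt_id x).add_const 2).const_mul 2).mul (hasDerivAt_klFun hx.ne')).sub
        ((((hasDerivAt_id x).sub_const 1).pow 2).const_mul 3) |>.congr_deriv ?_
      simp only [klFun_apply, id]
      ring
  have h1 : (1 : ℝ) ∈ Set.Ioi 0 := Set.mem_Ioi.mpr one_pos
  suffices ψ 1 ≤ ψ r by simpa [ψ, klFun_one] using this
  rcases le_total r 1 with hr1 | hr1
  · refine antitoneOn_of_hasDerivWithinAt_nonpos (f' := ψ') (convex_Icc 0 1) hψ.continuousOn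
      (fun x hx => ?_) (fun x hx => ?_) ⟨hr, hr1⟩ ⟨zero_le_one, le_rfl⟩ hr1
    all_goals rw [interior_Icc] at hx
    · exact (hderiv x hx.1).hasDerivWithinAt
    · have := monotoneOn_add_one_mul_log_sub hx.1 h1 hx.2.le
      norm_num at this
      linarith
  · refine monotoneOn_of_hasDerivWithinAt_nonneg (f' := ψ') (convex_Ici 1) hψ.continuousOn
      (fun x hx => ?_) (fun x hx => ?_) Set.self_mem_Ici hr1 hr1
    all_goals rw [interior_Ici] at hx
    · exact (hderiv x (one_pos.trans hx)).hasDerivWithinAt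
    · have := monotoneOn_add_one_mul_log_sub h1 (Set.mem_Ioi.mpr (one_pos.trans hx)) hx.le
      norm_num at this
      linarith

lemma pent_eq_pmean_klFun (hp1 : ∑ a, p a = 1) (hm : 0 < pmean p u) :
    pent p u = pmean p (fun a => pmean p u * klFun (u a / pmean p u)) := by
  set m := pmean p u
  have hpointwise : ∀ a, m * klFun (u a / m) = u a * log (u a) - u a * log m + m - u a := by
    intro a
    rcases eq_or_ne (u a) 0 with hua | hua
    · simp [hua, klFun_zero]
    rw [klFun_apply, log_div hua hm.ne']
    field_simp
  simp only [hpointwise, pmean_sub, pmean_add, pmean_mul_const, pmean_const hp1, pent]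
  ring

lemma three_mul_sq_sub_le_mul_klFun {s m : ℝ} (hs : 0 ≤ s) (hm : 0 < m) :
    3 * (s - m) ^ 2 ≤ 2 * (s + 2 * m) * (m * klFun (s / m)) := by
  have h := mul_le_mul_of_nonneg_left (three_mul_sq_sub_one_le_klFun (div_nonneg hs hm.le))
    (sq_nonneg m)
  calc 3 * (s - m) ^ 2 = m ^ 2 * (3 * (s / m - 1) ^ 2) := by field_simp
    _ ≤ m ^ 2 * (2 * (s / m + 2) * klFun (s / m)) := h
    _ = 2 * (s + 2 * m) * (m * klFun (s / m)) := by field_simp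

/-- Pinsker's inequality, `‖μ - ν‖²_TV ≤ KL(μ ‖ ν) / 2` for `dμ = u dν / E u`. -/
lemma sq_pmean_abs_sub_le (hp : ∀ a, 0 ≤ p a) (hp1 : ∑ a, p a = 1) (hu : ∀ a, 0 ≤ u a) :
    pmean p (fun a => |u a - pmean p u|) ^ 2 ≤ 2 * pmean p u * pent p u := by
  rcases (pmean_nonneg hp hu).eq_or_lt with hm | hm
  · rw [← hm]
    simp only [sub_zero, abs_of_nonneg (hu _)]
    rw [← hm]
    simp
  set m := pmean p u
  have hden : ∀ a, 0 < u a + 2 * m := fun a => by linarith [hu a]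
  -- Cauchy–Schwarz with weights `p (u + 2m)`, whose total mass is `3m`.
  have hcs : pmean p (fun a => |u a - m|) ^ 2 ≤
      pmean p (fun a => u a + 2 * m) * pmean p (fun a => (u a - m) ^ 2 / (u a + 2 * m)) :=
    sum_sq_le_sum_mul_sum_of_sq_le_mul _ (fun a _ => mul_nonneg (hp a) (hden a).le)
      (fun a _ => mul_nonneg (hp a) (div_nonneg (sq_nonneg _) (hden a).le)) fun a _ => by
        rw [mul_pow, sq_abs, mul_mul_mul_comm, mul_div_cancel₀ _ (hden a).ne', sq]
  have hmass : pmean p (fun a => u a + 2 * m) = 3 * m := by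
    rw [pmean_add, pmean_const hp1]
    ring
  have hterm : ∀ a, (u a - m) ^ 2 / (u a + 2 * m) ≤ 2 / 3 * (m * klFun (u a / m)) := fun a => by
    rw [div_le_iff₀ (hden a)]
    linarith [three_mul_sq_sub_le_mul_klFun (hu a) hm]
  calc pmean p (fun a => |u a - m|) ^ 2
      ≤ 3 * m * pmean p (fun a => 2 / 3 * (m * klFun (u a / m))) :=
        hmass ▸ hcs.trans (mul_le_mul_of_nonneg_left (pmean_le_pmean hp hterm) (by linarith))
    _ = 2 * m * pent p u := by
      rw [pmean_const_mul, pent_eq_pmean_klFun hp1 hm]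
      ring

lemma pmean_mul_log_sub_le {h S : α → ℝ} (hp : ∀ a, 0 ≤ p a) (hh : ∀ a, 0 ≤ h a)
    (hS : ∀ a, 0 < S a) (hm : 0 < pmean p h) :
    pmean p (fun a => h a * log (S a)) - pmean p h * log (pmean p h) ≤
      pmean p (fun a => h a * S a) / pmean p h - pmean p h := by
  set m := pmean p h
  have pointwise : ∀ a, h a * log (S a) - h a * log m ≤ h a * S a * m⁻¹ - h a := fun a => by
    have := mul_le_mul_of_nonneg_left (log_le_sub_one_of_pos (div_pos (hS a) hm)) (hh a)
    rw [log_div (hS a).ne' hm.ne'] at this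
    linarith [show h a * (S a / m - 1) = h a * S a * m⁻¹ - h a by ring]
  have := pmean_le_pmean hp pointwise
  rwa [pmean_sub, pmean_sub, pmean_mul_const, pmean_mul_const, ← div_eq_mul_inv] at this

end Density

section Coupling

variable {X Y : Type*} [Fintype X] [Fintype Y] (π : X × Y → ℝ)

def condMeanX (f : X × Y → ℝ) (y : Y) : ℝ := pmean (condX π y) (fun x => f (x, y))

def condMeanY (f : X × Y → ℝ) (x : X) : ℝ := pmean (condY π x) (fun y => f (x, y))

/-- `|π(x,y) / (π_X(x) π_Y(y)) - 1| ≤ ε`, cleared of denominators. -/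
def IsWeaklyCorrelated (ε : ℝ) : Prop :=
  ∀ x y, |π (x, y) - margX π x * margY π y| ≤ ε * (margX π x * margY π y)

variable {π}

lemma condX_pos (hπ : ∀ z, 0 < π z) (hY : ∀ y, 0 < margY π y) (y : Y) (x : X) :
    0 < condX π y x :=
  div_pos (hπ _) (hY y)

lemma condY_pos (hπ : ∀ z, 0 < π z) (hX : ∀ x, 0 < margX π x) (x : X) (y : Y) :
    0 < condY π x y :=
  div_pos (hπ _) (hX x)

lemma sum_margX (hsum : ∑ z, π z = 1) : ∑ x, margX π x = 1 := by
  rw [← hsum, Fintype.sum_prod_type]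
  rfl

lemma sum_margY (hsum : ∑ z, π z = 1) : ∑ y, margY π y = 1 := by
  rw [← hsum, Fintype.sum_prod_type, sum_comm]
  rfl

lemma pmean_swap (F : X × Y → ℝ) :
    pmean (fun z : Y × X => π z.swap) (fun z => F z.swap) = pmean π F :=
  Fintype.sum_equiv (Equiv.prodComm Y X) _ _ fun _ => rfl

lemma pent_swap (F : X × Y → ℝ) :
    pent (fun z : Y × X => π z.swap) (fun z => F z.swap) = pent π F := by
  simp only [pent]
  rw [pmean_swap F, pmean_swap fun z => F z * Real.log (F z)]

lemma pmean_margX (F : X → ℝ) : pmean (margX π) F = pmean π (fun z => F z.1) := by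
  simp only [pmean, margX, sum_mul, Fintype.sum_prod_type]

lemma pmean_margY (F : Y → ℝ) : pmean (margY π) F = pmean π (fun z => F z.2) := by
  simp only [pmean, margY, sum_mul, Fintype.sum_prod_type]
  exact sum_comm

lemma pmean_margY_condX (hY : ∀ y, 0 < margY π y) (F : X × Y → ℝ) :
    pmean (margY π) (fun y => pmean (condX π y) (fun x => F (x, y))) = pmean π F := by
  simp only [pmean, condX, mul_sum, Fintype.sum_prod_type]
  rw [sum_comm]
  exact sum_congr rfl fun x _ => sum_congr rfl fun y _ => by field_simp [(hY y).ne']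

lemma pmean_margX_condY (hX : ∀ x, 0 < margX π x) (F : X × Y → ℝ) :
    pmean (margX π) (fun x => pmean (condY π x) (fun y => F (x, y))) = pmean π F :=
  (pmean_margY_condX (π := fun z => π z.swap) hX fun z => F z.swap).trans (pmean_swap F)

lemma pent_eq_sum_pent_condX_add (hY : ∀ y, 0 < margY π y) (f : X × Y → ℝ) :
    pent π f = ∑ y, margY π y * pent (condX π y) (fun x => f (x, y)) +
      pent (margY π) (condMeanX π f) := by
  rw [pent, ← pmean_margY_condX hY, ← pmean_margY_condX hY f]
  simp only [pent, condMeanX, pmean, mul_sub, sum_sub_distrib]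
  ring

lemma pent_eq_sum_pent_condY_add (hX : ∀ x, 0 < margX π x) (f : X × Y → ℝ) :
    pent π f = ∑ x, margX π x * pent (condY π x) (fun y => f (x, y)) +
      pent (margX π) (condMeanY π f) := by
  rw [← pent_swap f]
  exact pent_eq_sum_pent_condX_add (π := fun z => π z.swap) hX fun z => f z.swap

variable {f : X × Y → ℝ}

lemma pmean_margY_mul_log_le (hX : ∀ x, 0 < margX π x) (hY : ∀ y, 0 < margY π y)
    (hπ : ∀ z, 0 < π z) (hf : ∀ z, 0 ≤ f z) :
    pmean (margY π) (fun y => condMeanX π f y * Real.log (condMeanX π f y)) ≤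
      ∑ x, margX π x * pent (condY π x) (fun y => f (x, y)) +
        pmean (margX π)
          (fun x => condMeanY π f x * Real.log (pmean (condY π x) (condMeanX π f))) := by
  set g := condMeanX π f
  have hcondX := condX_pos hπ hY
  have hcondY := condY_pos hπ hX
  have hg : ∀ y, 0 ≤ g y := fun y => pmean_nonneg (fun x => (hcondX y x).le) fun x => hf _
  calc pmean (margY π) (fun y => g y * Real.log (g y))
      = pmean π (fun z => f z * Real.log (g z.2)) := by
        rw [← pmean_margY_condX hY]
        simp only [pmean_mul_const]
        rfl
    _ = pmean (margX π) (fun x => pmean (condY π x) (fun y => f (x, y) * Real.log (g y))) :=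
        (pmean_margX_condY hX _).symm
    _ ≤ pmean (margX π) (fun x => pent (condY π x) (fun y => f (x, y)) +
          condMeanY π f x * Real.log (pmean (condY π x) g)) :=
        pmean_le_pmean (fun x => (hX x).le) fun x =>
          pmean_mul_log_le_pent_add (fun y => (hcondY x y).le) (fun y => hf _) hg fun y hfxy =>
            (mul_pos (hcondX y x) ((hf _).lt_of_ne' hfxy)).trans_le
              (mul_le_pmean (u := fun x => f (x, y)) (fun x => (hcondX y x).le) (fun x => hf _) x)
    _ = _ := pmean_add

namespace IsWeaklyCorrelated

variable {ε : ℝ}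

lemma of_abs_condX_div_sub_le (hX : ∀ x, 0 < margX π x) (hY : ∀ y, 0 < margY π y)
    (hcorr : ∀ y x, |condX π y x / margX π x - 1| ≤ ε) : IsWeaklyCorrelated π ε := fun x y => by
  have hprod := mul_pos (hX x) (hY y)
  have : π (x, y) - margX π x * margY π y =
      margX π x * margY π y * (condX π y x / margX π x - 1) := by
    rw [condX, div_div, mul_comm (margY π y), mul_sub_one, mul_div_cancel₀ _ hprod.ne']
  rw [this, abs_mul, abs_of_pos hprod, mul_comm ε]
  exact mul_le_mul_of_nonneg_left (hcorr y x) hprod.le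

lemma pos (hW : IsWeaklyCorrelated π ε) (hε : ε < 1) (hX : ∀ x, 0 < margX π x)
    (hY : ∀ y, 0 < margY π y) (z : X × Y) : 0 < π z := by
  have h := (abs_le.mp (hW z.1 z.2)).1
  nlinarith [mul_pos (hX z.1) (hY z.2)]

lemma cov_le (hW : IsWeaklyCorrelated π ε) (hsum : ∑ z, π z = 1) (h : X → ℝ) (g : Y → ℝ) :
    pmean π (fun z => h z.1 * g z.2) - pmean (margX π) h * pmean (margY π) g ≤
      ε * (pmean (margX π) (fun x => |h x - pmean (margX π) h|) *
        pmean (margY π) (fun y => |g y - pmean (margY π) g|)) := by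
  set a := pmean (margX π) h
  set b := pmean (margY π) g
  have hcentre : pmean π (fun z => h z.1 * g z.2) - a * b =
      pmean π (fun z => (h z.1 - a) * (g z.2 - b)) := by
    have : ∀ z : X × Y, (h z.1 - a) * (g z.2 - b) =
        h z.1 * g z.2 - a * g z.2 - b * h z.1 + a * b := fun z => by ring
    simp only [this, pmean_add, pmean_sub, pmean_const_mul, pmean_const hsum, ← pmean_margX,
      ← pmean_margY]
    ring
  -- Both centred factors have mean zero under the product of the marginals.
  have hsplit : pmean π (fun z => (h z.1 - a) * (g z.2 - b)) =
      ∑ x, ∑ y, (π (x, y) - margX π x * margY π y) * ((h x - a) * (g y - b)) := by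
    have hb : pmean (margY π) (fun y => g y - b) = 0 := by
      rw [pmean_sub, pmean_const (sum_margY hsum), sub_self]
    have hprod : ∑ x, ∑ y, margX π x * margY π y * ((h x - a) * (g y - b)) = 0 := by
      rw [← mul_zero (pmean (margX π) (fun x => h x - a)), ← hb]
      simp only [pmean, sum_mul_sum]
      exact sum_congr rfl fun x _ => sum_congr rfl fun y _ => by ring
    simp only [sub_mul (π _), sum_sub_distrib, hprod, sub_zero]
    rw [pmean, Fintype.sum_prod_type]
  rw [hcentre, hsplit]
  calc ∑ x, ∑ y, (π (x, y) - margX π x * margY π y) * ((h x - a) * (g y - b))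
      ≤ ∑ x, ∑ y, ε * (margX π x * margY π y) * |(h x - a) * (g y - b)| :=
        sum_le_sum fun x _ => sum_le_sum fun y _ => (le_abs_self _).trans <|
          (abs_mul _ _).trans_le (mul_le_mul_of_nonneg_right (hW x y) (abs_nonneg _))
    _ = ε * (pmean (margX π) (fun x => |h x - a|) * pmean (margY π) (fun y => |g y - b|)) := by
        rw [pmean, pmean, sum_mul_sum, mul_sum]
        simp only [mul_sum, abs_mul]
        exact sum_congr rfl fun x _ => sum_congr rfl fun y _ => by ring

lemma pent_condMeanX_le (hW : IsWeaklyCorrelated π ε) (hsum : ∑ z, π z = 1)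
    (hX : ∀ x, 0 < margX π x) (hY : ∀ y, 0 < margY π y) (hπ : ∀ z, 0 < π z) (hε : 0 ≤ ε)
    (hf : ∀ z, 0 ≤ f z) (hm : 0 < pmean π f) :
    pent (margY π) (condMeanX π f) ≤ ∑ x, margX π x * pent (condY π x) (fun y => f (x, y)) +
      ε * (pent (margX π) (condMeanY π f) + pent (margY π) (condMeanX π f)) := by
  set g := condMeanX π f
  set h := condMeanY π f
  set m := pmean π f
  set S := fun x => pmean (condY π x) g
  have hgm : pmean (margY π) g = m := pmean_margY_condX hY f
  have hhm : pmean (margX π) h = m := pmean_margX_condY hX f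
  have hg : ∀ y, 0 ≤ g y := fun y => pmean_nonneg (fun x => (condX_pos hπ hY y x).le) fun x => hf _
  have hh : ∀ x, 0 ≤ h x := fun x => pmean_nonneg (fun y => (condY_pos hπ hX x y).le) fun y => hf _
  have hS : ∀ x, 0 < S x := by
    obtain ⟨y₀, hy₀⟩ : ∃ y, 0 < g y := by
      by_contra! hg0
      exact hm.ne' (hgm ▸ sum_eq_zero fun y _ => by rw [(hg0 y).antisymm (hg y), mul_zero])
    exact fun x => (mul_pos (condY_pos hπ hX x y₀) hy₀).trans_le
      (mul_le_pmean (fun y => (condY_pos hπ hX x y).le) hg y₀)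
  have hcross : pmean (margX π) (fun x => h x * S x) = pmean π (fun z => h z.1 * g z.2) := by
    rw [← pmean_margX_condY hX]
    simp only [pmean_const_mul]
    rfl
  have hdual : pmean (margY π) (fun y => g y * Real.log (g y)) ≤
      ∑ x, margX π x * pent (condY π x) (fun y => f (x, y)) +
        pmean (margX π) (fun x => h x * Real.log (S x)) :=
    pmean_margY_mul_log_le hX hY hπ hf
  have hlog := pmean_mul_log_sub_le (fun x => (hX x).le) hh hS (hhm ▸ hm)
  have hcov := hW.cov_le hsum h g
  have hP := sq_pmean_abs_sub_le (fun x => (hX x).le) (sum_margX hsum) hh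
  have hQ := sq_pmean_abs_sub_le (fun y => (hY y).le) (sum_margY hsum) hg
  rw [hhm, hcross] at hlog
  simp only [hhm, hgm] at hcov hP hQ
  set P := pmean (margX π) (fun x => |h x - m|)
  set Q := pmean (margY π) (fun y => |g y - m|)
  have hPQ : P * Q ≤ m * (pent (margX π) h + pent (margY π) g) := by
    nlinarith [sq_nonneg (P - Q)]
  set B := ∑ x, margX π x * pent (condY π x) (fun y => f (x, y))
  calc pent (margY π) g = pmean (margY π) (fun y => g y * Real.log (g y)) - m * Real.log m := by
        rw [pent, hgm]
    _ ≤ B + (pmean π (fun z => h z.1 * g z.2) - m * m) / m := by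
        rw [sub_div, mul_self_div_self]
        linarith
    _ ≤ B + ε * (P * Q) / m := by gcongr
    _ ≤ B + ε * (pent (margX π) h + pent (margY π) g) := by
        rw [add_le_add_iff_left, div_le_iff₀ hm]
        nlinarith [mul_le_mul_of_nonneg_left hPQ hε]

end IsWeaklyCorrelated

end Coupling

theorem ent_factorization_weak_correlation_general
    {X Y : Type*} [Fintype X] [Fintype Y]
    (π : X × Y → ℝ) (hsum : ∑ z, π z = 1)
    (hX : ∀ x, 0 < margX π x) (hY : ∀ y, 0 < margY π y)
    (ε : ℝ) (hε0 : 0 ≤ ε) (hε1 : ε < 1 / 2)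
    (hcorr : ∀ y x, |condX π y x / margX π x - 1| ≤ ε)
    (f : X × Y → ℝ) (hf : ∀ z, 0 ≤ f z) :
    pent π f ≤ (1 + ε / (1 - 2 * ε)) *
      ((∑ y, margY π y * pent (condX π y) (fun x => f (x, y))) +
       (∑ x, margX π x * pent (condY π x) (fun y => f (x, y)))) := by
  have hW := IsWeaklyCorrelated.of_abs_condX_div_sub_le hX hY hcorr
  have hπ := hW.pos (by linarith) hX hY
  rcases (pmean_nonneg (fun z => (hπ z).le) hf).eq_or_lt with hm | hm
  · obtain rfl : f = 0 := funext fun z =>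
      (mul_eq_zero.mp (mul_eq_zero_of_pmean_eq_zero (fun z => (hπ z).le) hf hm.symm z)).resolve_left
        (hπ z).ne'
    simp [pent, pmean]
  have hstep := hW.pent_condMeanX_le hsum hX hY hπ hε0 hf hm
  have hchainX := pent_eq_sum_pent_condY_add hX f
  have hchainY := pent_eq_sum_pent_condX_add hY f
  have h2ε : 0 < 1 - 2 * ε := by linarith
  have hcoef : 1 + ε / (1 - 2 * ε) = (1 - ε) / (1 - 2 * ε) := by
    rw [eq_div_iff h2ε.ne', add_mul, div_mul_cancel₀ _ h2ε.ne']
    ring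
  rw [hcoef, div_mul_eq_mul_div, le_div_iff₀ h2ε]
  linear_combination hstep + (1 - ε) * hchainY - ε * hchainX

/-- **Two-variable factorization of entropy with weak correlation.**
If `|π_X^y(x)/π_X(x) - 1| ≤ ε` for all `x, y` with `0 ≤ ε < 1/2`, then
`Ent f ≤ (1 + ε/(1-2ε)) (E[Ent_X f] + E[Ent_Y f])` for all nonnegative `f`. -/
theorem ent_factorization_weak_correlation
    {X Y : Type*} [Fintype X] [Fintype Y] [Nonempty X] [Nonempty Y]
    (π : X × Y → ℝ) (hnn : ∀ z, 0 ≤ π z) (hsum : ∑ z, π z = 1)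
    (hX : ∀ x, 0 < margX π x) (hY : ∀ y, 0 < margY π y)
    (ε : ℝ) (hε0 : 0 ≤ ε) (hε1 : ε < 1 / 2)
    (hcorr : ∀ y x, |condX π y x / margX π x - 1| ≤ ε)
    (f : X × Y → ℝ) (hf : ∀ z, 0 ≤ f z) :
    pent π f ≤ (1 + ε / (1 - 2 * ε)) *
      ((∑ y, margY π y * pent (condX π y) (fun x => f (x, y))) +
       (∑ x, margX π x * pent (condY π x) (fun y => f (x, y)))) :=
  ent_factorization_weak_correlation_general π hsum hX hY ε hε0 hε1 hcorr f hf

end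
end

section
/- Suppose there exist reals ε_X, ε_Y ∈ [0,1] with ε_X · ε_Y > 0 such that d_TV(π_X^y, π_X^{y'}) ≤ 1 − ε_X for all y, y' ∈ 𝒴, and d_TV(π_Y^x, π_Y^{x'}) ≤ 1 − ε_Y for all x, x' ∈ 𝒳. Then for every function f : 𝒳 × 𝒴 → ℝ, Var f ≤ (2/(ε_X + ε_Y)) · (E[Var_X f] + E[Var_Y f]). -/
open scoped BigOperators Classical

noncomputable section

/-!
Center `f` to `F = f - E f` and let `g = E[F | y]`, `k = E[F | x]`. By the law of total
variance the right-hand side is `(2 / (εX + εY)) (2‖F‖² - ‖g‖² - ‖k‖²)`, so it suffices that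
`‖g‖² + ‖k‖² ≤ (1 + ρ) ‖F‖²` with `ρ = 1 - (εX + εY) / 2`. As `g` and `k` are orthogonal
projections of `F`, this follows from the correlation bound `⟨g, k⟩² ≤ ρ² ‖g‖² ‖k‖²`, which is
the `L²` contraction of the two-step chain `y → x → y'` on mean-zero functions. Dobrushin's
coefficients make that chain contract oscillations by `(1 - εX) (1 - εY) ≤ ρ²`, and since it is
self-adjoint and positive the power method transfers the contraction to `L²`.
-/

open Finset Function

section Oscillation

variable {α : Type*} [Fintype α] [Nonempty α]

def osc (u : α → ℝ) : ℝ := univ.sup' univ_nonempty u - univ.inf' univ_nonempty u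

lemma sub_le_osc (u : α → ℝ) (a b : α) : u a - u b ≤ osc u :=
  sub_le_sub (le_sup' u (mem_univ a)) (inf'_le u (mem_univ b))

lemma osc_nonneg (u : α → ℝ) : 0 ≤ osc u := by
  simpa using sub_le_osc u (Classical.arbitrary α) (Classical.arbitrary α)

lemma osc_le_of_forall_sub_le {u : α → ℝ} {c : ℝ} (h : ∀ a b, u a - u b ≤ c) : osc u ≤ c := by
  obtain ⟨a, -, ha⟩ := exists_mem_eq_sup' univ_nonempty u
  obtain ⟨b, -, hb⟩ := exists_mem_eq_inf' univ_nonempty u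
  rw [osc, ha, hb]
  exact h a b

lemma exists_forall_abs_sub_le_half_osc (u : α → ℝ) : ∃ c, ∀ a, |u a - c| ≤ osc u / 2 := by
  refine ⟨(univ.sup' univ_nonempty u + univ.inf' univ_nonempty u) / 2, fun a => ?_⟩
  have := le_sup' u (mem_univ a)
  have := inf'_le u (mem_univ a)
  exact abs_sub_le_iff.2 ⟨by unfold osc; linarith, by unfold osc; linarith⟩

lemma sum_mul_le_sum_abs_mul_half_osc {d : α → ℝ} (hd : ∑ a, d a = 0) (u : α → ℝ) :
    ∑ a, d a * u a ≤ (∑ a, |d a|) * (osc u / 2) := by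
  obtain ⟨c, hc⟩ := exists_forall_abs_sub_le_half_osc u
  calc ∑ a, d a * u a = ∑ a, d a * (u a - c) := by simp [mul_sub, ← sum_mul, hd]
    _ ≤ ∑ a, |d a| * (osc u / 2) := sum_le_sum fun a _ =>
        calc d a * (u a - c) ≤ |d a| * |u a - c| := (le_abs_self _).trans (abs_mul _ _).le
          _ ≤ |d a| * (osc u / 2) := mul_le_mul_of_nonneg_left (hc a) (abs_nonneg _)
    _ = (∑ a, |d a|) * (osc u / 2) := by rw [sum_mul]

lemma osc_pmean_le {β : Type*} [Fintype β] [Nonempty β] {K : β → α → ℝ}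
    (hK : ∀ b, ∑ a, K b a = 1) {δ : ℝ} (hδ : ∀ b b', ptv (K b) (K b') ≤ δ) (u : α → ℝ) :
    osc (fun b => pmean (K b) u) ≤ δ * osc u := by
  refine osc_le_of_forall_sub_le fun b b' => ?_
  have hd : ∑ a, (K b a - K b' a) = 0 := by simp [sum_sub_distrib, hK]
  calc pmean (K b) u - pmean (K b') u = ∑ a, (K b a - K b' a) * u a := by
        simp [pmean, sub_mul]
    _ ≤ (∑ a, |K b a - K b' a|) * (osc u / 2) := sum_mul_le_sum_abs_mul_half_osc hd u
    _ = ptv (K b) (K b') * osc u := by rw [ptv]; ring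
    _ ≤ δ * osc u := mul_le_mul_of_nonneg_right (hδ b b') (osc_nonneg u)

end Oscillation

section Pmean

variable {α : Type*} [Fintype α]

lemma pmean_mul_sq_le {w : α → ℝ} (hw : ∀ a, 0 ≤ w a) (u v : α → ℝ) :
    pmean w (u * v) ^ 2 ≤ pmean w (u ^ 2) * pmean w (v ^ 2) :=
  sum_sq_le_sum_mul_sum_of_sq_le_mul _ (fun a _ => mul_nonneg (hw a) (sq_nonneg _))
    (fun a _ => mul_nonneg (hw a) (sq_nonneg _))
    (fun a _ => by simp only [Pi.mul_apply, Pi.pow_apply]; nlinarith)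

lemma pmean_sq_nonneg {w : α → ℝ} (hw : ∀ a, 0 ≤ w a) (u : α → ℝ) : 0 ≤ pmean w (u ^ 2) :=
  sum_nonneg fun a _ => mul_nonneg (hw a) (sq_nonneg _)

lemma pvar_eq_pmean_sq_sub {p : α → ℝ} (hp : ∑ a, p a = 1) (f : α → ℝ) :
    pvar p f = pmean p (f ^ 2) - pmean p f ^ 2 := by
  have h : pvar p f = ∑ a, (p a * f a ^ 2 - 2 * pmean p f * (p a * f a) + pmean p f ^ 2 * p a) :=
    sum_congr rfl fun a _ => by ring
  rw [h, sum_add_distrib, sum_sub_distrib, ← mul_sum, ← mul_sum, hp]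
  simp only [pmean, Pi.pow_apply]
  ring

lemma pvar_sub_const {p : α → ℝ} (hp : ∑ a, p a = 1) (f : α → ℝ) (c : ℝ) :
    pvar p (fun a => f a - c) = pvar p f := by
  have h : pmean p (fun a => f a - c) = pmean p f - c := by
    simp [pmean, mul_sub, sum_sub_distrib, ← sum_mul, hp]
  simp only [pvar, h, sub_sub_sub_cancel_right]

lemma pmean_sq_add_pmean_sq_le {w F p q : α → ℝ} (hw : ∀ a, 0 ≤ w a)
    (hp : pmean w (F * p) = pmean w (p ^ 2)) (hq : pmean w (F * q) = pmean w (q ^ 2))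
    {ρ : ℝ} (hρ : 0 ≤ ρ)
    (hpq : pmean w (p * q) ^ 2 ≤ ρ ^ 2 * (pmean w (p ^ 2) * pmean w (q ^ 2))) :
    pmean w (p ^ 2) + pmean w (q ^ 2) ≤ (1 + ρ) * pmean w (F ^ 2) := by
  set P := pmean w (p ^ 2)
  set Q := pmean w (q ^ 2)
  set S := pmean w (p * q)
  have hP := pmean_sq_nonneg hw p
  have hQ := pmean_sq_nonneg hw q
  have hV := pmean_sq_nonneg hw F
  have hS : 2 * S ≤ ρ * (P + Q) := by
    refine le_of_abs_le (abs_le_of_sq_le_sq ?_ (by positivity))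
    nlinarith [sq_nonneg (P - Q), sq_nonneg ρ]
  have hsum : pmean w ((p + q) ^ 2) = P + Q + 2 * S := by
    simp only [P, Q, S, pmean, Pi.pow_apply, Pi.add_apply, Pi.mul_apply, add_sq, mul_add,
      sum_add_distrib, mul_sum]
    ring_nf
  have hF : pmean w (F * (p + q)) = P + Q := by
    simp only [← hp, ← hq, pmean, Pi.mul_apply, Pi.add_apply, mul_add, sum_add_distrib]
  have hCS := pmean_mul_sq_le hw F (p + q)
  rw [hF, hsum] at hCS
  have hCS' : (P + Q) * (P + Q) ≤ (1 + ρ) * pmean w (F ^ 2) * (P + Q) := by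
    nlinarith [mul_le_mul_of_nonneg_left hS hV]
  rcases (add_nonneg hP hQ).eq_or_lt with h0 | h0
  · rw [← h0]
    positivity
  · exact le_of_mul_le_mul_right hCS' h0

end Pmean

lemma le_of_forall_pow_two_pow_le {x b K : ℝ} (hb : 0 ≤ b)
    (h : ∀ n : ℕ, x ^ 2 ^ n ≤ K * b ^ 2 ^ n) : x ≤ b := by
  by_contra! hbx
  rcases hb.eq_or_lt with rfl | hb
  · simpa [hbx.not_ge] using h 0
  · have hr : 1 < x / b := (one_lt_div hb).2 hbx
    obtain ⟨n, hn⟩ := pow_unbounded_of_one_lt K hr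
    have hK : (x / b) ^ 2 ^ n ≤ K := by
      rw [div_pow, div_le_iff₀ (pow_pos hb _)]
      exact h n
    exact (hn.trans_le ((pow_le_pow_right₀ hr.le n.lt_two_pow_self.le).trans hK)).false

section SelfAdjoint

variable {α : Type*} [Fintype α] {μ : α → ℝ} {M : (α → ℝ) → α → ℝ}

lemma pmean_mul_iterate_comm (hM : ∀ u v, pmean μ (u * M v) = pmean μ (M u * v)) (n : ℕ)
    (u v : α → ℝ) : pmean μ (u * M^[n] v) = pmean μ (M^[n] u * v) := by
  induction n generalizing u v with
  | zero => rfl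
  | succ n ih => rw [iterate_succ_apply, ih, hM, ← iterate_succ_apply' M n u]

lemma osc_iterate_le [Nonempty α] {δ : ℝ} (hδ : 0 ≤ δ) (hM : ∀ u, osc (M u) ≤ δ * osc u)
    (n : ℕ) (u : α → ℝ) : osc (M^[n] u) ≤ δ ^ n * osc u := by
  induction n with
  | zero => simp
  | succ n ih =>
    rw [iterate_succ_apply', pow_succ', mul_assoc]
    exact (hM _).trans (mul_le_mul_of_nonneg_left ih hδ)

/-- Power method: `⟨g, Mⁿ g⟩ = O(δⁿ)` since `g` has mean zero, while Cauchy–Schwarz and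
self-adjointness give `(⟨g, M g⟩ / ‖g‖²) ^ 2ⁿ ≤ ⟨g, M ^ 2ⁿ g⟩ / ‖g‖²`. -/
theorem pmean_mul_apply_le_of_osc_le [Nonempty α] (hμ : ∀ a, 0 ≤ μ a)
    (hM : ∀ u v, pmean μ (u * M v) = pmean μ (M u * v)) (hMpos : ∀ u, 0 ≤ pmean μ (u * M u))
    {δ : ℝ} (hδ : 0 ≤ δ) (hosc : ∀ u, osc (M u) ≤ δ * osc u) {g : α → ℝ}
    (hg : pmean μ g = 0) : pmean μ (g * M g) ≤ δ * pmean μ (g ^ 2) := by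
  set s : ℕ → ℝ := fun n => pmean μ (g * M^[n] g)
  set a := pmean μ (g ^ 2)
  change s 1 ≤ δ * a
  have hs_sq : ∀ n, s n ^ 2 ≤ a * s (2 * n) := fun n => by
    calc s n ^ 2 ≤ a * pmean μ ((M^[n] g) ^ 2) := pmean_mul_sq_le hμ _ _
      _ = a * s (2 * n) := by
        rw [sq, ← pmean_mul_iterate_comm hM, ← iterate_add_apply, ← two_mul]
  set C := (∑ b, |μ b * g b|) * (osc g / 2)
  have hs_le : ∀ n, s n ≤ C * δ ^ n := fun n => by
    calc s n = ∑ b, μ b * g b * (M^[n] g) b := sum_congr rfl fun b _ => (mul_assoc _ _ _).symm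
      _ ≤ (∑ b, |μ b * g b|) * (osc (M^[n] g) / 2) := sum_mul_le_sum_abs_mul_half_osc hg _
      _ ≤ (∑ b, |μ b * g b|) * (δ ^ n * osc g / 2) := by
        refine mul_le_mul_of_nonneg_left ?_ (sum_nonneg fun b _ => abs_nonneg _)
        linarith [osc_iterate_le hδ hosc n g]
      _ = C * δ ^ n := by ring
  obtain ha | ha : 0 = a ∨ 0 < a := (pmean_sq_nonneg hμ g).eq_or_lt
  · have := hs_sq 1
    rw [← ha, zero_mul] at this
    rw [← ha, mul_zero]
    nlinarith
  · have hpow : ∀ n : ℕ, (s 1 / a) ^ 2 ^ n ≤ s (2 ^ n) / a := by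
      intro n
      induction n with
      | zero => simp
      | succ n ih =>
        calc (s 1 / a) ^ 2 ^ (n + 1) = ((s 1 / a) ^ 2 ^ n) ^ 2 := by rw [pow_succ, pow_mul]
          _ ≤ (s (2 ^ n) / a) ^ 2 :=
            pow_le_pow_left₀ (pow_nonneg (div_nonneg (hMpos g) ha.le) _) ih 2
          _ = s (2 ^ n) ^ 2 / a ^ 2 := div_pow _ _ _
          _ ≤ a * s (2 * 2 ^ n) / a ^ 2 := div_le_div_of_nonneg_right (hs_sq _) (sq_nonneg a)
          _ = s (2 ^ (n + 1)) / a := by rw [← pow_succ']; field_simp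
    refine (div_le_iff₀ ha).1 (le_of_forall_pow_two_pow_le (K := C / a) hδ fun n => ?_)
    calc (s 1 / a) ^ 2 ^ n ≤ s (2 ^ n) / a := hpow n
      _ ≤ C * δ ^ 2 ^ n / a := div_le_div_of_nonneg_right (hs_le _) ha.le
      _ = C / a * δ ^ 2 ^ n := by ring

end SelfAdjoint

section Bivariate

variable {X Y : Type*} [Fintype X] [Fintype Y]

/-- `condExpX π F y = E[F | y]`: the first coordinate is averaged out. -/
def condExpX (π F : X × Y → ℝ) (y : Y) : ℝ := pmean (condX π y) (fun x => F (x, y))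

def condExpY (π F : X × Y → ℝ) (x : X) : ℝ := pmean (condY π x) (fun y => F (x, y))

lemma pmean_comp_swap (π F : X × Y → ℝ) :
    pmean (π ∘ Prod.swap) (F ∘ Prod.swap) = pmean π F :=
  Fintype.sum_equiv (Equiv.prodComm Y X) _ _ fun _ => rfl

lemma pmean_comp_snd (π : X × Y → ℝ) (u : Y → ℝ) :
    pmean π (fun z => u z.2) = pmean (margY π) u := by
  simp only [pmean, margY, Fintype.sum_prod_type_right, sum_mul]

lemma pmean_comp_fst (π : X × Y → ℝ) (u : X → ℝ) :
    pmean π (fun z => u z.1) = pmean (margX π) u := by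
  rw [← pmean_comp_swap]
  exact pmean_comp_snd (π ∘ Prod.swap) u

variable {π : X × Y → ℝ}

lemma sum_condX {y : Y} (hy : margY π y ≠ 0) : ∑ x, condX π y x = 1 := by
  simp only [condX, ← sum_div]
  exact div_self hy

lemma sum_condY {x : X} (hx : margX π x ≠ 0) : ∑ y, condY π x y = 1 :=
  sum_condX (π := π ∘ Prod.swap) hx

lemma pmean_margY_mul_condExpX (hY : ∀ y, margY π y ≠ 0) (F : X × Y → ℝ) (u : Y → ℝ) :
    pmean (margY π) (condExpX π F * u) = pmean π (F * fun z => u z.2) := by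
  rw [pmean, pmean, Fintype.sum_prod_type_right]
  refine sum_congr rfl fun y _ => ?_
  simp only [Pi.mul_apply, condExpX, pmean, sum_mul, mul_sum, ← mul_assoc, condX,
    mul_div_cancel₀ _ (hY y)]

lemma pmean_margX_mul_condExpY (hX : ∀ x, margX π x ≠ 0) (F : X × Y → ℝ) (u : X → ℝ) :
    pmean (margX π) (condExpY π F * u) = pmean π (F * fun z => u z.1) := by
  rw [← pmean_comp_swap π]
  exact pmean_margY_mul_condExpX (π := π ∘ Prod.swap) hX (F ∘ Prod.swap) u

lemma pmean_margY_condExpX (hY : ∀ y, margY π y ≠ 0) (F : X × Y → ℝ) :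
    pmean (margY π) (condExpX π F) = pmean π F := by
  calc pmean (margY π) (condExpX π F) = pmean (margY π) (condExpX π F * 1) := by rw [mul_one]
    _ = pmean π (F * 1) := pmean_margY_mul_condExpX hY F 1
    _ = pmean π F := by rw [mul_one]

lemma sum_margY_mul_pvar_condX (hY : ∀ y, margY π y ≠ 0) (F : X × Y → ℝ) :
    ∑ y, margY π y * pvar (condX π y) (fun x => F (x, y))
      = pmean π (F ^ 2) - pmean (margY π) (condExpX π F ^ 2) := by
  rw [← pmean_margY_condExpX hY (F ^ 2), pmean, pmean, ← sum_sub_distrib]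
  refine sum_congr rfl fun y _ => ?_
  rw [pvar_eq_pmean_sq_sub (sum_condX (hY y)), mul_sub]
  rfl

lemma sum_margX_mul_pvar_condY (hX : ∀ x, margX π x ≠ 0) (F : X × Y → ℝ) :
    ∑ x, margX π x * pvar (condY π x) (fun y => F (x, y))
      = pmean π (F ^ 2) - pmean (margX π) (condExpY π F ^ 2) := by
  rw [← pmean_comp_swap π]
  exact sum_margY_mul_pvar_condX (π := π ∘ Prod.swap) hX (F ∘ Prod.swap)

end Bivariate

section Correlation

variable {X Y : Type*} [Fintype X] [Fintype Y] [Nonempty X] [Nonempty Y] {π : X × Y → ℝ}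
  {δX δY : ℝ}

/-- The two-step chain `u ↦ E[E[u | x] | y]` is self-adjoint and positive on `L²(π_Y)`, and
contracts oscillations by `δX δY`. -/
theorem pmean_margX_condExpY_sq_le (hX : ∀ x, 0 < margX π x) (hY : ∀ y, 0 < margY π y)
    (hδX : 0 ≤ δX) (hδY : 0 ≤ δY) (htvX : ∀ y y', ptv (condX π y) (condX π y') ≤ δX)
    (htvY : ∀ x x', ptv (condY π x) (condY π x') ≤ δY) {g : Y → ℝ}
    (hg : pmean (margY π) g = 0) :
    pmean (margX π) (condExpY π (fun z => g z.2) ^ 2) ≤ δX * δY * pmean (margY π) (g ^ 2) := by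
  set T : (Y → ℝ) → X → ℝ := fun u => condExpY π (fun z => u z.2)
  have hTT : ∀ u v, pmean (margY π) (u * condExpX π (fun z => T v z.1))
      = pmean (margX π) (T u * T v) := fun u v => by
    rw [mul_comm, pmean_margY_mul_condExpX (fun y => (hY y).ne'),
      pmean_margX_mul_condExpY (fun x => (hX x).ne'), mul_comm]
  have hosc : ∀ u, osc (condExpX π (fun z => T u z.1)) ≤ δX * δY * osc u := fun u =>
    calc _ ≤ δX * osc (T u) := osc_pmean_le (fun y => sum_condX (hY y).ne') htvX (T u)
      _ ≤ δX * (δY * osc u) := mul_le_mul_of_nonneg_left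
          (osc_pmean_le (fun x => sum_condY (hX x).ne') htvY u) hδX
      _ = δX * δY * osc u := by ring
  rw [sq, ← hTT]
  refine pmean_mul_apply_le_of_osc_le (fun y => (hY y).le) (fun u v => ?_) (fun u => ?_)
    (mul_nonneg hδX hδY) hosc hg
  · rw [hTT, mul_comm _ v, hTT, mul_comm]
  · rw [hTT]
    exact sum_nonneg fun x _ => mul_nonneg (hX x).le (mul_self_nonneg _)

theorem pmean_comp_snd_mul_comp_fst_sq_le (hX : ∀ x, 0 < margX π x) (hY : ∀ y, 0 < margY π y)
    (hδX : 0 ≤ δX) (hδY : 0 ≤ δY) (htvX : ∀ y y', ptv (condX π y) (condX π y') ≤ δX)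
    (htvY : ∀ x x', ptv (condY π x) (condY π x') ≤ δY) {g : Y → ℝ}
    (hg : pmean (margY π) g = 0) (k : X → ℝ) :
    pmean π ((fun z => g z.2) * fun z => k z.1) ^ 2
      ≤ δX * δY * (pmean (margY π) (g ^ 2) * pmean (margX π) (k ^ 2)) := by
  rw [← pmean_margX_mul_condExpY (fun x => (hX x).ne')]
  calc _ ≤ pmean (margX π) (condExpY π (fun z => g z.2) ^ 2) * pmean (margX π) (k ^ 2) :=
        pmean_mul_sq_le (fun x => (hX x).le) _ _
    _ ≤ δX * δY * pmean (margY π) (g ^ 2) * pmean (margX π) (k ^ 2) :=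
        mul_le_mul_of_nonneg_right (pmean_margX_condExpY_sq_le hX hY hδX hδY htvX htvY hg)
          (pmean_sq_nonneg (fun x => (hX x).le) k)
    _ = _ := by ring

theorem pmean_condExpX_sq_add_pmean_condExpY_sq_le (hnn : ∀ z, 0 ≤ π z)
    (hX : ∀ x, 0 < margX π x) (hY : ∀ y, 0 < margY π y)
    (hδX : 0 ≤ δX) (hδY : 0 ≤ δY) (htvX : ∀ y y', ptv (condX π y) (condX π y') ≤ δX)
    (htvY : ∀ x x', ptv (condY π x) (condY π x') ≤ δY) {ρ : ℝ} (hρ : 0 ≤ ρ)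
    (hδρ : δX * δY ≤ ρ ^ 2) {F : X × Y → ℝ} (hF : pmean π F = 0) :
    pmean (margY π) (condExpX π F ^ 2) + pmean (margX π) (condExpY π F ^ 2)
      ≤ (1 + ρ) * pmean π (F ^ 2) := by
  have hY' : ∀ y, margY π y ≠ 0 := fun y => (hY y).ne'
  have hX' : ∀ x, margX π x ≠ 0 := fun x => (hX x).ne'
  set g := condExpX π F
  set k := condExpY π F
  have hG : pmean π ((fun z => g z.2) ^ 2) = pmean (margY π) (g ^ 2) := pmean_comp_snd π (g ^ 2)
  have hH : pmean π ((fun z => k z.1) ^ 2) = pmean (margX π) (k ^ 2) := pmean_comp_fst π (k ^ 2)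
  rw [← hG, ← hH]
  refine pmean_sq_add_pmean_sq_le hnn ?_ ?_ hρ ?_
  · rw [hG, ← pmean_margY_mul_condExpX hY', sq]
  · rw [hH, ← pmean_margX_mul_condExpY hX', sq]
  · rw [hG, hH]
    refine (pmean_comp_snd_mul_comp_fst_sq_le hX hY hδX hδY htvX htvY ?_ k).trans ?_
    · rw [pmean_margY_condExpX hY', hF]
    · exact mul_le_mul_of_nonneg_right hδρ (mul_nonneg
        (pmean_sq_nonneg (fun y => (hY y).le) g) (pmean_sq_nonneg (fun x => (hX x).le) k))

end Correlation

/-- **Two-variable factorization of variance with strong correlation.**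
If `d_TV(π_X^y, π_X^{y'}) ≤ 1 - ε_X` and `d_TV(π_Y^x, π_Y^{x'}) ≤ 1 - ε_Y` with
`ε_X, ε_Y ∈ [0,1]`, `ε_X ε_Y > 0`, then
`Var f ≤ (2/(ε_X + ε_Y)) (E[Var_X f] + E[Var_Y f])`. -/
theorem var_factorization_strong_correlation
    {X Y : Type*} [Fintype X] [Fintype Y] [Nonempty X] [Nonempty Y]
    (π : X × Y → ℝ) (hnn : ∀ z, 0 ≤ π z) (hsum : ∑ z, π z = 1)
    (hX : ∀ x, 0 < margX π x) (hY : ∀ y, 0 < margY π y)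
    (εX εY : ℝ) (hεX : εX ∈ Set.Icc (0 : ℝ) 1) (hεY : εY ∈ Set.Icc (0 : ℝ) 1)
    (hpos : 0 < εX * εY)
    (htvX : ∀ y y', ptv (condX π y) (condX π y') ≤ 1 - εX)
    (htvY : ∀ x x', ptv (condY π x) (condY π x') ≤ 1 - εY)
    (f : X × Y → ℝ) :
    pvar π f ≤ (2 / (εX + εY)) *
      ((∑ y, margY π y * pvar (condX π y) (fun x => f (x, y))) +
       (∑ x, margX π x * pvar (condY π x) (fun y => f (x, y)))) := by
  obtain ⟨hεX0, hεX1⟩ := hεX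
  obtain ⟨hεY0, hεY1⟩ := hεY
  have hε : 0 < εX + εY := add_pos_of_nonneg_of_pos hεX0 (pos_of_mul_pos_right hpos hεX0)
  set F : X × Y → ℝ := fun z => f z - pmean π f
  have hF : pmean π F = 0 := by simp [F, pmean, mul_sub, sum_sub_distrib, ← sum_mul, hsum]
  have hvarX : ∀ y, pvar (condX π y) (fun x => f (x, y)) = pvar (condX π y) (fun x => F (x, y)) :=
    fun y => (pvar_sub_const (sum_condX (hY y).ne') _ _).symm
  have hvarY : ∀ x, pvar (condY π x) (fun y => f (x, y)) = pvar (condY π x) (fun y => F (x, y)) :=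
    fun x => (pvar_sub_const (sum_condY (hX x).ne') _ _).symm
  simp only [hvarX, hvarY, sum_margY_mul_pvar_condX (fun y => (hY y).ne'),
    sum_margX_mul_pvar_condY (fun x => (hX x).ne')]
  have key := pmean_condExpX_sq_add_pmean_condExpY_sq_le hnn hX hY (sub_nonneg.2 hεX1)
    (sub_nonneg.2 hεY1) htvX htvY (ρ := 1 - (εX + εY) / 2) (by linarith)
    (by nlinarith [sq_nonneg (εX - εY)]) hF
  change pmean π (F ^ 2) ≤ _
  rw [div_mul_eq_mul_div, le_div_iff₀ hε]
  linarith

end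
end

section
/- Let C ≥ 1 be a real. The joint distribution π satisfies {{X,Z},{Y,Z}}-factorization of variance with constant C (i.e., Var f ≤ C(E[Var_{XZ} f] + E[Var_{YZ} f]) for every f : 𝒳 × 𝒴 × 𝒵 → ℝ) if and only if the marginal distribution π_{XY} satisfies approximate tensorization of variance with constant C (i.e., Var_{π_{XY}} g ≤ C(E_{XY}[Var_X g] + E_{XY}[Var_Y g]) for every g : 𝒳 × 𝒴 → ℝ). -/
open scoped BigOperators Classical

set_option linter.unusedSectionVars false

noncomputable section

lemma pvar_eq_sub {α : Type*} [Fintype α] (p f : α → ℝ) (h1 : ∑ a, p a = 1) :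
    pvar p f = pmean p (fun a => f a ^ 2) - (pmean p f) ^ 2 := by
  unfold pvar pmean
  have h : ∀ a ∈ Finset.univ (α := α), p a * (f a - ∑ b, p b * f b) ^ 2 =
      (p a * f a ^ 2 - 2 * (∑ b, p b * f b) * (p a * f a)) + (∑ b, p b * f b) ^ 2 * p a := by
    intros; ring
  rw [Finset.sum_congr rfl h, Finset.sum_add_distrib, Finset.sum_sub_distrib,
      ← Finset.mul_sum, ← Finset.mul_sum, h1]
  ring

lemma pmean_fst {A B : Type*} [Fintype A] [Fintype B] (p : A × B → ℝ) (h : A → ℝ) :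
    pmean p (fun q => h q.1) = pmean (fun a => ∑ b, p (a, b)) h := by
  unfold pmean
  rw [Fintype.sum_prod_type]
  exact Finset.sum_congr rfl fun a _ => by rw [Finset.sum_mul]

lemma pvar_fst {A B : Type*} [Fintype A] [Fintype B] (p : A × B → ℝ) (h : A → ℝ) :
    pvar p (fun q => h q.1) = pvar (fun a => ∑ b, p (a, b)) h := by
  unfold pvar
  rw [pmean_fst p h]
  exact pmean_fst p (fun a => (h a - pmean (fun a => ∑ b, p (a, b)) h) ^ 2)

-- Cauchy-Schwarz style: (∑ p f)^2 ≤ (∑ p) * (∑ p f^2)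
lemma sq_sum_le {ι : Type*} [Fintype ι] (p f : ι → ℝ) (hp : ∀ i, 0 ≤ p i) :
    (∑ i, p i * f i) ^ 2 ≤ (∑ i, p i) * ∑ i, p i * f i ^ 2 := by
  have h := Finset.sum_mul_sq_le_sq_mul_sq Finset.univ
    (fun i => Real.sqrt (p i)) (fun i => Real.sqrt (p i) * f i)
  have e1 : ∀ i, Real.sqrt (p i) * (Real.sqrt (p i) * f i) = p i * f i := by
    intro i; rw [← mul_assoc, Real.mul_self_sqrt (hp i)]
  have e2 : ∀ i, Real.sqrt (p i) ^ 2 = p i := fun i => Real.sq_sqrt (hp i)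
  have e3 : ∀ i, (Real.sqrt (p i) * f i) ^ 2 = p i * f i ^ 2 := by
    intro i; rw [mul_pow, e2]
  calc (∑ i, p i * f i) ^ 2 = (∑ i, Real.sqrt (p i) * (Real.sqrt (p i) * f i)) ^ 2 := by
        rw [Finset.sum_congr rfl fun i _ => (e1 i).symm]
    _ ≤ (∑ i, Real.sqrt (p i) ^ 2) * ∑ i, (Real.sqrt (p i) * f i) ^ 2 := h
    _ = (∑ i, p i) * ∑ i, p i * f i ^ 2 := by
        rw [Finset.sum_congr rfl fun i _ => e2 i, Finset.sum_congr rfl fun i _ => e3 i]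


variable {X Y Z : Type*} [Fintype X] [Fintype Y] [Fintype Z]

/-- Marginal of a distribution on `X × Y × Z` on the `(X, Y)` coordinates. -/
def margXY (π : X × Y × Z → ℝ) : X × Y → ℝ := fun p => ∑ z, π (p.1, p.2, z)

/-- Marginal on the `X` coordinate. -/
def margX3 (π : X × Y × Z → ℝ) : X → ℝ := fun x => ∑ y, ∑ z, π (x, y, z)

/-- Marginal on the `Y` coordinate. -/
def margY3 (π : X × Y × Z → ℝ) : Y → ℝ := fun y => ∑ x, ∑ z, π (x, y, z)

/-- Conditional law of `(X, Z)` given `Y = y`. -/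
def condXZ (π : X × Y × Z → ℝ) (y : Y) : X × Z → ℝ :=
  fun p => π (p.1, y, p.2) / margY3 π y

/-- Conditional law of `(Y, Z)` given `X = x`. -/
def condYZ (π : X × Y × Z → ℝ) (x : X) : Y × Z → ℝ :=
  fun p => π (x, p.1, p.2) / margX3 π x

/-- Conditional law of `X` given `Y = y` (under the marginal `π_{XY}`). -/
def condXgY (π : X × Y × Z → ℝ) (y : Y) : X → ℝ :=
  fun x => margXY π (x, y) / margY3 π y

/-- Conditional law of `Y` given `X = x` (under the marginal `π_{XY}`). -/
def condYgX (π : X × Y × Z → ℝ) (x : X) : Y → ℝ :=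
  fun y => margXY π (x, y) / margX3 π x


lemma sum_margXY_x (π : X × Y × Z → ℝ) (y : Y) :
    ∑ x, margXY π (x, y) = margY3 π y := rfl

lemma sum_margXY_y (π : X × Y × Z → ℝ) (x : X) :
    ∑ y, margXY π (x, y) = margX3 π x := rfl

lemma pmean_condXZ (π : X × Y × Z → ℝ) (y : Y) (F : X × Z → ℝ) :
    pmean (condXZ π y) F = (∑ x, ∑ z, π (x, y, z) * F (x, z)) / margY3 π y := by
  unfold pmean condXZ
  rw [Fintype.sum_prod_type]
  simp only [div_mul_eq_mul_div]
  simp only [← Finset.sum_div]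

lemma pmean_condYZ (π : X × Y × Z → ℝ) (x : X) (F : Y × Z → ℝ) :
    pmean (condYZ π x) F = (∑ y, ∑ z, π (x, y, z) * F (y, z)) / margX3 π x := by
  unfold pmean condYZ
  rw [Fintype.sum_prod_type]
  simp only [div_mul_eq_mul_div]
  simp only [← Finset.sum_div]

lemma pmean_condXgY (π : X × Y × Z → ℝ) (y : Y) (h : X → ℝ) :
    pmean (condXgY π y) h = (∑ x, margXY π (x, y) * h x) / margY3 π y := by
  unfold pmean condXgY
  simp only [div_mul_eq_mul_div]
  rw [← Finset.sum_div]

lemma pmean_condYgX (π : X × Y × Z → ℝ) (x : X) (h : Y → ℝ) :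
    pmean (condYgX π x) h = (∑ y, margXY π (x, y) * h y) / margX3 π x := by
  unfold pmean condYgX
  simp only [div_mul_eq_mul_div]
  rw [← Finset.sum_div]

lemma sum_condXZ (π : X × Y × Z → ℝ) (y : Y) (h : margY3 π y ≠ 0) :
    ∑ q : X × Z, condXZ π y q = 1 := by
  unfold condXZ
  rw [← Finset.sum_div, Fintype.sum_prod_type]
  exact div_self h

lemma sum_condYZ (π : X × Y × Z → ℝ) (x : X) (h : margX3 π x ≠ 0) :
    ∑ q : Y × Z, condYZ π x q = 1 := by
  unfold condYZ
  rw [← Finset.sum_div, Fintype.sum_prod_type]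
  exact div_self h

lemma sum_condXgY (π : X × Y × Z → ℝ) (y : Y) (h : margY3 π y ≠ 0) :
    ∑ x, condXgY π y x = 1 := by
  unfold condXgY
  rw [← Finset.sum_div, sum_margXY_x]
  exact div_self h

lemma sum_condYgX (π : X × Y × Z → ℝ) (x : X) (h : margX3 π x ≠ 0) :
    ∑ y, condYgX π x y = 1 := by
  unfold condYgX
  rw [← Finset.sum_div, sum_margXY_y]
  exact div_self h

lemma margXY_zero (π : X × Y × Z → ℝ) (hnn : ∀ w, 0 ≤ π w) {x : X} {y : Y}
    (hm : margXY π (x, y) = 0) : ∀ z, π (x, y, z) = 0 := by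
  have hm' : ∑ z, π (x, y, z) = 0 := hm
  intro z
  exact (Finset.sum_eq_zero_iff_of_nonneg (fun z _ => hnn (x, y, z))).mp hm' z
    (Finset.mem_univ z)

lemma mul_div_self_eq (m s : ℝ) (h0 : m = 0 → s = 0) : m * (s / m) = s := by
  by_cases hm : m = 0
  · simp [hm, h0 hm]
  · exact mul_div_cancel₀ s hm

lemma mul_div_sq_eq (m s : ℝ) : m * (s / m) ^ 2 = s ^ 2 / m := by
  by_cases hm : m = 0
  · simp [hm]
  · field_simp

lemma blockY_eq (π : X × Y × Z → ℝ) (hnn : ∀ w, 0 ≤ π w) (f : X × Y × Z → ℝ) (y : Y) :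
    margY3 π y * pvar (condXZ π y) (fun p => f (p.1, y, p.2))
      = ((∑ x, ∑ z, π (x, y, z) * f (x, y, z) ^ 2)
          - ∑ x, (∑ z, π (x, y, z) * f (x, y, z)) ^ 2 / margXY π (x, y))
        + margY3 π y * pvar (condXgY π y)
            (fun x => (∑ z, π (x, y, z) * f (x, y, z)) / margXY π (x, y)) := by
  by_cases hMy : margY3 π y = 0
  · have hmx : ∀ x, margXY π (x, y) = 0 := by
      have hM' : ∑ x, margXY π (x, y) = 0 := by rw [sum_margXY_x]; exact hMy
      intro x
      exact (Finset.sum_eq_zero_iff_of_nonneg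
        (fun x _ => Finset.sum_nonneg fun z _ => hnn (x, y, z))).mp hM' x (Finset.mem_univ x)
    have hπ0 : ∀ x z, π (x, y, z) = 0 := fun x => margXY_zero π hnn (hmx x)
    simp [hMy, hπ0]
  · have hs0 : ∀ x, margXY π (x, y) = 0 → ∑ z, π (x, y, z) * f (x, y, z) = 0 := by
      intro x hm
      exact Finset.sum_eq_zero fun z _ => by rw [margXY_zero π hnn hm z, zero_mul]
    have eXZ : pvar (condXZ π y) (fun p => f (p.1, y, p.2))
        = (∑ x, ∑ z, π (x, y, z) * f (x, y, z) ^ 2) / margY3 π y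
          - ((∑ x, ∑ z, π (x, y, z) * f (x, y, z)) / margY3 π y) ^ 2 := by
      rw [pvar_eq_sub _ _ (sum_condXZ π y hMy), pmean_condXZ, pmean_condXZ]
    have eg1 : pmean (condXgY π y)
        (fun x => (∑ z, π (x, y, z) * f (x, y, z)) / margXY π (x, y))
        = (∑ x, ∑ z, π (x, y, z) * f (x, y, z)) / margY3 π y := by
      rw [pmean_condXgY]
      congr 1
      exact Finset.sum_congr rfl fun x _ =>
        mul_div_self_eq _ _ (hs0 x)
    have eg2 : pvar (condXgY π y)
        (fun x => (∑ z, π (x, y, z) * f (x, y, z)) / margXY π (x, y))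
        = (∑ x, (∑ z, π (x, y, z) * f (x, y, z)) ^ 2 / margXY π (x, y)) / margY3 π y
          - ((∑ x, ∑ z, π (x, y, z) * f (x, y, z)) / margY3 π y) ^ 2 := by
      rw [pvar_eq_sub _ _ (sum_condXgY π y hMy), pmean_condXgY, eg1]
      congr 2
      exact Finset.sum_congr rfl fun x _ => mul_div_sq_eq _ _
    rw [eXZ, eg2]
    field_simp
    ring

lemma blockX_eq (π : X × Y × Z → ℝ) (hnn : ∀ w, 0 ≤ π w) (f : X × Y × Z → ℝ) (x : X) :
    margX3 π x * pvar (condYZ π x) (fun p => f (x, p.1, p.2))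
      = ((∑ y, ∑ z, π (x, y, z) * f (x, y, z) ^ 2)
          - ∑ y, (∑ z, π (x, y, z) * f (x, y, z)) ^ 2 / margXY π (x, y))
        + margX3 π x * pvar (condYgX π x)
            (fun y => (∑ z, π (x, y, z) * f (x, y, z)) / margXY π (x, y)) := by
  by_cases hMx : margX3 π x = 0
  · have hmy : ∀ y, margXY π (x, y) = 0 := by
      have hM' : ∑ y, margXY π (x, y) = 0 := by rw [sum_margXY_y]; exact hMx
      intro y
      exact (Finset.sum_eq_zero_iff_of_nonneg
        (fun y _ => Finset.sum_nonneg fun z _ => hnn (x, y, z))).mp hM' y (Finset.mem_univ y)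
    have hπ0 : ∀ y z, π (x, y, z) = 0 := fun y => margXY_zero π hnn (hmy y)
    simp [hMx, hπ0]
  · have hs0 : ∀ y, margXY π (x, y) = 0 → ∑ z, π (x, y, z) * f (x, y, z) = 0 := by
      intro y hm
      exact Finset.sum_eq_zero fun z _ => by rw [margXY_zero π hnn hm z, zero_mul]
    have eYZ : pvar (condYZ π x) (fun p => f (x, p.1, p.2))
        = (∑ y, ∑ z, π (x, y, z) * f (x, y, z) ^ 2) / margX3 π x
          - ((∑ y, ∑ z, π (x, y, z) * f (x, y, z)) / margX3 π x) ^ 2 := by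
      rw [pvar_eq_sub _ _ (sum_condYZ π x hMx), pmean_condYZ, pmean_condYZ]
    have eg1 : pmean (condYgX π x)
        (fun y => (∑ z, π (x, y, z) * f (x, y, z)) / margXY π (x, y))
        = (∑ y, ∑ z, π (x, y, z) * f (x, y, z)) / margX3 π x := by
      rw [pmean_condYgX]
      congr 1
      exact Finset.sum_congr rfl fun y _ =>
        mul_div_self_eq _ _ (hs0 y)
    have eg2 : pvar (condYgX π x)
        (fun y => (∑ z, π (x, y, z) * f (x, y, z)) / margXY π (x, y))
        = (∑ y, (∑ z, π (x, y, z) * f (x, y, z)) ^ 2 / margXY π (x, y)) / margX3 π x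
          - ((∑ y, ∑ z, π (x, y, z) * f (x, y, z)) / margX3 π x) ^ 2 := by
      rw [pvar_eq_sub _ _ (sum_condYgX π x hMx), pmean_condYgX, eg1]
      congr 2
      exact Finset.sum_congr rfl fun y _ => mul_div_sq_eq _ _
    rw [eYZ, eg2]
    field_simp
    ring

lemma totvar_eq (π : X × Y × Z → ℝ) (hnn : ∀ w, 0 ≤ π w) (hsum : ∑ w, π w = 1)
    (f : X × Y × Z → ℝ) :
    pvar π f = ((∑ p : X × Y, ∑ z, π (p.1, p.2, z) * f (p.1, p.2, z) ^ 2)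
        - ∑ p : X × Y, (∑ z, π (p.1, p.2, z) * f (p.1, p.2, z)) ^ 2 / margXY π p)
      + pvar (margXY π)
          (fun p => (∑ z, π (p.1, p.2, z) * f (p.1, p.2, z)) / margXY π p) := by
  have hsum1 : ∑ p : X × Y, margXY π p = 1 := by
    rw [← hsum]
    simp [margXY, Fintype.sum_prod_type]
  have hs0 : ∀ p : X × Y, margXY π p = 0 →
      ∑ z, π (p.1, p.2, z) * f (p.1, p.2, z) = 0 := by
    intro p hm
    exact Finset.sum_eq_zero fun z _ => by rw [margXY_zero π hnn hm z, zero_mul]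
  have hmean : pmean π f = ∑ p : X × Y, ∑ z, π (p.1, p.2, z) * f (p.1, p.2, z) := by
    simp [pmean, Fintype.sum_prod_type]
  have hmean2 : pmean π (fun w => f w ^ 2)
      = ∑ p : X × Y, ∑ z, π (p.1, p.2, z) * f (p.1, p.2, z) ^ 2 := by
    simp [pmean, Fintype.sum_prod_type]
  have hg1 : pmean (margXY π)
      (fun p => (∑ z, π (p.1, p.2, z) * f (p.1, p.2, z)) / margXY π p)
      = ∑ p : X × Y, ∑ z, π (p.1, p.2, z) * f (p.1, p.2, z) := by
    unfold pmean
    exact Finset.sum_congr rfl fun p _ => mul_div_self_eq _ _ (hs0 p)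
  have hg2 : pmean (margXY π)
      (fun p => ((∑ z, π (p.1, p.2, z) * f (p.1, p.2, z)) / margXY π p) ^ 2)
      = ∑ p : X × Y, (∑ z, π (p.1, p.2, z) * f (p.1, p.2, z)) ^ 2 / margXY π p := by
    unfold pmean
    exact Finset.sum_congr rfl fun p _ => mul_div_sq_eq _ _
  rw [pvar_eq_sub π f hsum, pvar_eq_sub _ _ hsum1, hmean, hmean2, hg1, hg2]
  ring

lemma TsubR_nonneg (π : X × Y × Z → ℝ) (hnn : ∀ w, 0 ≤ π w) (f : X × Y × Z → ℝ) :
    ∑ p : X × Y, (∑ z, π (p.1, p.2, z) * f (p.1, p.2, z)) ^ 2 / margXY π p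
      ≤ ∑ p : X × Y, ∑ z, π (p.1, p.2, z) * f (p.1, p.2, z) ^ 2 := by
  refine Finset.sum_le_sum fun p _ => ?_
  have ht : 0 ≤ ∑ z, π (p.1, p.2, z) * f (p.1, p.2, z) ^ 2 :=
    Finset.sum_nonneg fun z _ => mul_nonneg (hnn _) (sq_nonneg _)
  by_cases hm : margXY π p = 0
  · rw [hm, div_zero]; exact ht
  · have hmpos : 0 < margXY π p :=
      lt_of_le_of_ne (Finset.sum_nonneg fun z _ => hnn _) (Ne.symm hm)
    rw [div_le_iff₀ hmpos]
    have := sq_sum_le (fun z => π (p.1, p.2, z)) (fun z => f (p.1, p.2, z))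
      (fun z => hnn _)
    calc (∑ z, π (p.1, p.2, z) * f (p.1, p.2, z)) ^ 2
        ≤ (∑ z, π (p.1, p.2, z)) * ∑ z, π (p.1, p.2, z) * f (p.1, p.2, z) ^ 2 := this
      _ = (∑ z, π (p.1, p.2, z) * f (p.1, p.2, z) ^ 2) * margXY π p := mul_comm _ _

lemma pmean_xyfun (π : X × Y × Z → ℝ) (g : X × Y → ℝ) :
    pmean π (fun w => g (w.1, w.2.1)) = pmean (margXY π) g := by
  simp [pmean, margXY, Fintype.sum_prod_type, Finset.sum_mul]

lemma pvar_xyfun (π : X × Y × Z → ℝ) (g : X × Y → ℝ) :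
    pvar π (fun w => g (w.1, w.2.1)) = pvar (margXY π) g := by
  unfold pvar
  rw [pmean_xyfun]
  exact pmean_xyfun π (fun p => (g p - pmean (margXY π) g) ^ 2)

lemma condXZ_marg (π : X × Y × Z → ℝ) (y : Y) :
    (fun x => ∑ z, condXZ π y (x, z)) = condXgY π y := by
  funext x
  simp only [condXZ, condXgY, ← Finset.sum_div]
  rfl

lemma condYZ_marg (π : X × Y × Z → ℝ) (x : X) :
    (fun y => ∑ z, condYZ π x (y, z)) = condYgX π x := by
  funext y
  simp only [condYZ, condYgX, ← Finset.sum_div]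
  rfl

theorem aux_main
    (π : X × Y × Z → ℝ) (hnn : ∀ w, 0 ≤ π w) (hsum : ∑ w, π w = 1)
    (C : ℝ) (hC : 1 ≤ C) :
    (∀ f : X × Y × Z → ℝ,
        pvar π f ≤ C *
          ((∑ y, margY3 π y * pvar (condXZ π y) (fun p => f (p.1, y, p.2))) +
           (∑ x, margX3 π x * pvar (condYZ π x) (fun p => f (x, p.1, p.2))))) ↔
    (∀ g : X × Y → ℝ,
        pvar (margXY π) g ≤ C *
          ((∑ y, margY3 π y * pvar (condXgY π y) (fun x => g (x, y))) +
           (∑ x, margX3 π x * pvar (condYgX π x) (fun y => g (x, y))))) := by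
  constructor
  · -- factorization → tensorization
    intro H g
    have e2 : ∀ y : Y, pvar (condXZ π y) (fun p : X × Z => g (p.1, y))
        = pvar (condXgY π y) (fun x => g (x, y)) := by
      intro y
      have h := pvar_fst (condXZ π y) (fun x => g (x, y))
      rw [condXZ_marg π y] at h
      exact h
    have e3 : ∀ x : X, pvar (condYZ π x) (fun p : Y × Z => g (x, p.1))
        = pvar (condYgX π x) (fun y => g (x, y)) := by
      intro x
      have h := pvar_fst (condYZ π x) (fun y => g (x, y))
      rw [condYZ_marg π x] at h
      exact h
    have h1 : pvar (margXY π) g ≤ C *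
        ((∑ y, margY3 π y * pvar (condXZ π y) (fun p : X × Z => g (p.1, y))) +
         (∑ x, margX3 π x * pvar (condYZ π x) (fun p : Y × Z => g (x, p.1)))) := by
      have h := H (fun w => g (w.1, w.2.1))
      rw [pvar_xyfun] at h
      exact h
    have hA : (∑ y, margY3 π y * pvar (condXZ π y) (fun p : X × Z => g (p.1, y)))
        = ∑ y, margY3 π y * pvar (condXgY π y) (fun x => g (x, y)) :=
      Finset.sum_congr rfl fun y _ => by rw [e2 y]
    have hB : (∑ x, margX3 π x * pvar (condYZ π x) (fun p : Y × Z => g (x, p.1)))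
        = ∑ x, margX3 π x * pvar (condYgX π x) (fun y => g (x, y)) :=
      Finset.sum_congr rfl fun x _ => by rw [e3 x]
    rw [hA, hB] at h1
    exact h1
  · -- tensorization → factorization
    intro H f
    have htot := totvar_eq π hnn hsum f
    have hTR : 0 ≤ (∑ p : X × Y, ∑ z, π (p.1, p.2, z) * f (p.1, p.2, z) ^ 2)
        - ∑ p : X × Y, (∑ z, π (p.1, p.2, z) * f (p.1, p.2, z)) ^ 2 / margXY π p :=
      sub_nonneg.mpr (TsubR_nonneg π hnn f)
    have htt : ∀ u : X × Y → ℝ, ∑ y, ∑ x, u (x, y) = ∑ p : X × Y, u p := by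
      intro u
      rw [Fintype.sum_prod_type]
      exact Finset.sum_comm
    have htt' : ∀ u : X × Y → ℝ, ∑ x, ∑ y, u (x, y) = ∑ p : X × Y, u p := by
      intro u
      rw [Fintype.sum_prod_type]
    have hsumY : (∑ y, margY3 π y * pvar (condXZ π y) (fun p => f (p.1, y, p.2)))
        = ((∑ p : X × Y, ∑ z, π (p.1, p.2, z) * f (p.1, p.2, z) ^ 2)
            - ∑ p : X × Y, (∑ z, π (p.1, p.2, z) * f (p.1, p.2, z)) ^ 2 / margXY π p)
          + ∑ y, margY3 π y * pvar (condXgY π y)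
              (fun x => (∑ z, π (x, y, z) * f (x, y, z)) / margXY π (x, y)) := by
      rw [Finset.sum_congr rfl fun y _ => blockY_eq π hnn f y,
          Finset.sum_add_distrib, Finset.sum_sub_distrib,
          htt (fun p => ∑ z, π (p.1, p.2, z) * f (p.1, p.2, z) ^ 2),
          htt (fun p => (∑ z, π (p.1, p.2, z) * f (p.1, p.2, z)) ^ 2 / margXY π p)]
    have hsumX : (∑ x, margX3 π x * pvar (condYZ π x) (fun p => f (x, p.1, p.2)))
        = ((∑ p : X × Y, ∑ z, π (p.1, p.2, z) * f (p.1, p.2, z) ^ 2)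
            - ∑ p : X × Y, (∑ z, π (p.1, p.2, z) * f (p.1, p.2, z)) ^ 2 / margXY π p)
          + ∑ x, margX3 π x * pvar (condYgX π x)
              (fun y => (∑ z, π (x, y, z) * f (x, y, z)) / margXY π (x, y)) := by
      rw [Finset.sum_congr rfl fun x _ => blockX_eq π hnn f x,
          Finset.sum_add_distrib, Finset.sum_sub_distrib,
          htt' (fun p => ∑ z, π (p.1, p.2, z) * f (p.1, p.2, z) ^ 2),
          htt' (fun p => (∑ z, π (p.1, p.2, z) * f (p.1, p.2, z)) ^ 2 / margXY π p)]
    have h2 : pvar (margXY π)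
        (fun p => (∑ z, π (p.1, p.2, z) * f (p.1, p.2, z)) / margXY π p)
        ≤ C * ((∑ y, margY3 π y * pvar (condXgY π y)
              (fun x => (∑ z, π (x, y, z) * f (x, y, z)) / margXY π (x, y)))
          + (∑ x, margX3 π x * pvar (condYgX π x)
              (fun y => (∑ z, π (x, y, z) * f (x, y, z)) / margXY π (x, y)))) :=
      H (fun p => (∑ z, π (p.1, p.2, z) * f (p.1, p.2, z)) / margXY π p)
    rw [htot, hsumY, hsumX]
    nlinarith [mul_nonneg (sub_nonneg.mpr hC) hTR,
      mul_nonneg (le_trans zero_le_one hC) hTR]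

/-- **Equivalence of overlapping-block factorization and marginal tensorization (variance).**
`π` satisfies `{{X,Z},{Y,Z}}`-factorization of variance with constant `C ≥ 1` iff the
marginal `π_{XY}` satisfies approximate tensorization of variance with constant `C`. -/
theorem var_block_factorization_iff_marginal_tensorization
    {X Y Z : Type*} [Fintype X] [Fintype Y] [Fintype Z]
    [Nonempty X] [Nonempty Y] [Nonempty Z]
    (π : X × Y × Z → ℝ) (hnn : ∀ w, 0 ≤ π w) (hsum : ∑ w, π w = 1)
    (C : ℝ) (hC : 1 ≤ C) :
    (∀ f : X × Y × Z → ℝ,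
        pvar π f ≤ C *
          ((∑ y, margY3 π y * pvar (condXZ π y) (fun p => f (p.1, y, p.2))) +
           (∑ x, margX3 π x * pvar (condYZ π x) (fun p => f (x, p.1, p.2))))) ↔
    (∀ g : X × Y → ℝ,
        pvar (margXY π) g ≤ C *
          ((∑ y, margY3 π y * pvar (condXgY π y) (fun x => g (x, y))) +
           (∑ x, margX3 π x * pvar (condYgX π x) (fun y => g (x, y))))) :=
  aux_main π hnn hsum C hC

end
end
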